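/- arXiv:1008.4095 — 2 statements merged into one kernel-verified Lean document; each statement's English description precedes it below -/
import Mathlib

section
/- In the setting of the Bari–Markus theorem, if Γ₁ ⊂ Γ is a finite subset such that M² ∑_{γ∈Γ∖Γ₁} ‖P_γ − P⁰_γ‖² < 1/4 (where M = ‖A‖·‖A^{-1}‖), then the operator T x = ∑_{γ∈Γ∖Γ₁} (P_γ − P⁰_γ) P⁰_γ x satisfies ‖T‖ < 1/2, and hence B = I + T is a bounded invertible operator on H. -/
/-!
For every `x`, Cauchy–Schwarz gives
`∑ ‖(P γ − P⁰ γ)(P⁰ γ x)‖ ≤ (∑ ‖P γ − P⁰ γ‖²)^{1/2} (∑ ‖P⁰ γ x‖²)^{1/2} ≤ (M² ∑ ‖P γ − P⁰ γ‖²)^{1/2} ‖x‖`,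
so the series converges absolutely and defines `T` with `‖T‖ < 1/2`; then `I + T` is invertible
by the Neumann series.
-/

open Real

theorem Real.summable_mul_and_tsum_mul_le_sqrt_mul_sqrt {ι : Type*} {f g : ι → ℝ}
    (hf : ∀ i, 0 ≤ f i) (hg : ∀ i, 0 ≤ g i)
    (hf_sum : Summable fun i => f i ^ 2) (hg_sum : Summable fun i => g i ^ 2) :
    (Summable fun i => f i * g i) ∧
      ∑' i, f i * g i ≤ √(∑' i, f i ^ 2) * √(∑' i, g i ^ 2) := by
  simp only [← Real.rpow_two] at hf_sum hg_sum ⊢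
  simpa only [Real.sqrt_eq_rpow] using
    summable_and_inner_le_Lp_mul_Lq_tsum_of_nonneg .two_two hf hg hf_sum hg_sum

theorem ContinuousLinearMap.exists_hasSum_apply_of_tsum_norm_le
    {𝕜 E F ι : Type*} [NontriviallyNormedField 𝕜] [NormedAddCommGroup E] [NormedSpace 𝕜 E]
    [NormedAddCommGroup F] [NormedSpace 𝕜 F] [CompleteSpace F]
    (S : ι → E →L[𝕜] F) {C : ℝ} (hC : 0 ≤ C)
    (hS : ∀ x, Summable fun i => ‖S i x‖) (hSC : ∀ x, ∑' i, ‖S i x‖ ≤ C * ‖x‖) :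
    ∃ T : E →L[𝕜] F, (∀ x, HasSum (fun i => S i x) (T x)) ∧ ‖T‖ ≤ C := by
  have hsum : ∀ x, HasSum (fun i => S i x) (∑' i, S i x) := fun x => (hS x).of_norm.hasSum
  let T : E →ₗ[𝕜] F :=
    { toFun := fun x => ∑' i, S i x
      map_add' := fun x y => by simpa only [map_add] using ((hsum x).add (hsum y)).tsum_eq
      map_smul' := fun c x => by
        simpa only [map_smul, RingHom.id_apply] using ((hsum x).const_smul c).tsum_eq }
  have hT : ∀ x, ‖T x‖ ≤ C * ‖x‖ := fun x => (norm_tsum_le_tsum_norm (hS x)).trans (hSC x)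
  exact ⟨T.mkContinuous C hT, hsum, T.mkContinuous_norm_le hC hT⟩

theorem ContinuousLinearMap.exists_hasSum_comp_apply_of_summable_sq
    {𝕜 E F G ι : Type*} [NontriviallyNormedField 𝕜] [NormedAddCommGroup E] [NormedSpace 𝕜 E]
    [NormedAddCommGroup F] [NormedSpace 𝕜 F] [NormedAddCommGroup G] [NormedSpace 𝕜 G]
    [CompleteSpace G] (U : ι → F →L[𝕜] G) (V : ι → E →L[𝕜] F) (K : ℝ)
    (hU : Summable fun i => ‖U i‖ ^ 2)
    (hV : ∀ x, (Summable fun i => ‖V i x‖ ^ 2) ∧ ∑' i, ‖V i x‖ ^ 2 ≤ K * ‖x‖ ^ 2) :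
    ∃ T : E →L[𝕜] G, (∀ x, HasSum (fun i => U i (V i x)) (T x)) ∧
      ‖T‖ ≤ √(K * ∑' i, ‖U i‖ ^ 2) := by
  have hCS x := Real.summable_mul_and_tsum_mul_le_sqrt_mul_sqrt (fun i => norm_nonneg (U i))
    (fun i => norm_nonneg (V i x)) hU (hV x).1
  have hle x i : ‖U i (V i x)‖ ≤ ‖U i‖ * ‖V i x‖ := (U i).le_opNorm _
  have hsum x : Summable fun i => ‖U i (V i x)‖ :=
    (hCS x).1.of_nonneg_of_le (fun _ => norm_nonneg _) (hle x)
  refine exists_hasSum_apply_of_tsum_norm_le (fun i => (U i).comp (V i)) (sqrt_nonneg _) hsum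
    fun x => ?_
  calc ∑' i, ‖U i (V i x)‖
      ≤ ∑' i, ‖U i‖ * ‖V i x‖ := (hsum x).tsum_le_tsum (hle x) (hCS x).1
    _ ≤ √(∑' i, ‖U i‖ ^ 2) * √(∑' i, ‖V i x‖ ^ 2) := (hCS x).2
    _ ≤ √(∑' i, ‖U i‖ ^ 2) * √(K * ‖x‖ ^ 2) := by gcongr; exact (hV x).2
    _ = √(K * ∑' i, ‖U i‖ ^ 2) * ‖x‖ := by
      rw [sqrt_mul' K (sq_nonneg _), sqrt_sq (norm_nonneg x),
        sqrt_mul' K (tsum_nonneg fun i => sq_nonneg _)]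
      ring

theorem ContinuousLinearMap.exists_equiv_one_add_of_norm_lt_one
    {𝕜 E : Type*} [NontriviallyNormedField 𝕜] [NormedAddCommGroup E] [NormedSpace 𝕜 E]
    [CompleteSpace E] {T : E →L[𝕜] E} (hT : ‖T‖ < 1) :
    ∃ B : E ≃L[𝕜] E, (B : E →L[𝕜] E) = 1 + T := by
  obtain ⟨u, hu⟩ := isUnit_one_sub_of_norm_lt_one (x := -T) (by rwa [norm_neg])
  exact ⟨.ofUnit u, by rw [← sub_neg_eq_add, ← hu]; rfl⟩

theorem bari_markus_perturbation_operator_general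
    {H : Type*} [NormedAddCommGroup H] [InnerProductSpace ℂ H] [CompleteSpace H]
    {Γ : Type*}
    (P : Γ → H →L[ℂ] H)
    (P0 : Γ → H →L[ℂ] H)
    (M : ℝ)
    (hbound : ∀ x : H, (Summable fun γ => ‖P0 γ x‖ ^ 2) ∧
      ∑' γ, ‖P0 γ x‖ ^ 2 ≤ M ^ 2 * ‖x‖ ^ 2)
    (Γ₁ : Finset Γ)
    (htail : Summable fun γ : {γ : Γ // γ ∉ Γ₁} => ‖P γ.1 - P0 γ.1‖ ^ 2)
    (hsmall : M ^ 2 * ∑' γ : {γ : Γ // γ ∉ Γ₁}, ‖P γ.1 - P0 γ.1‖ ^ 2 < 1 / 4) :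
    ∃ T : H →L[ℂ] H,
      (∀ x : H, HasSum (fun γ : {γ : Γ // γ ∉ Γ₁} =>
          (P γ.1 - P0 γ.1) (P0 γ.1 x)) (T x)) ∧
      ‖T‖ < 1 / 2 ∧
      ∃ B : H ≃L[ℂ] H, (B : H →L[ℂ] H) = 1 + T := by
  have hbound_tail x : (Summable fun γ : {γ : Γ // γ ∉ Γ₁} => ‖P0 γ.1 x‖ ^ 2) ∧
      ∑' γ : {γ : Γ // γ ∉ Γ₁}, ‖P0 γ.1 x‖ ^ 2 ≤ M ^ 2 * ‖x‖ ^ 2 :=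
    ⟨(hbound x).1.subtype _, ((hbound x).1.tsum_subtype_le _ _ fun _ => sq_nonneg _).trans
      (hbound x).2⟩
  obtain ⟨T, hT_sum, hT_norm⟩ :=
    ContinuousLinearMap.exists_hasSum_comp_apply_of_summable_sq (𝕜 := ℂ)
      (fun γ : {γ : Γ // γ ∉ Γ₁} => P γ.1 - P0 γ.1) (fun γ => P0 γ.1) (M ^ 2) htail hbound_tail
  have hT_half : ‖T‖ < 1 / 2 :=
    hT_norm.trans_lt ((sqrt_lt' (by norm_num)).2 (by linarith))
  exact ⟨T, hT_sum, hT_half,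
    ContinuousLinearMap.exists_equiv_one_add_of_norm_lt_one (by linarith)⟩

/-- in the Bari–Markus setting, if `Γ₁ ⊂ Γ` is finite and
`M² ∑_{γ∉Γ₁} ‖P γ − P⁰ γ‖² < 1/4` (with `M = ‖A‖‖A⁻¹‖` and
`∑ γ ‖P⁰ γ x‖² ≤ M²‖x‖²`), then `T x = ∑_{γ∉Γ₁} (P γ − P⁰ γ)(P⁰ γ x)` defines a
bounded operator with `‖T‖ < 1/2`, and `B = I + T` is bounded invertible. -/
theorem bari_markus_perturbation_operator
    {H : Type*} [NormedAddCommGroup H] [InnerProductSpace ℂ H] [CompleteSpace H]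
    {Γ : Type*} [Countable Γ]
    (P : Γ → H →L[ℂ] H)
    (hPidem : ∀ γ, (P γ).comp (P γ) = P γ)
    (hPfin : ∀ γ, FiniteDimensional ℂ (LinearMap.range (P γ : H →ₗ[ℂ] H)))
    (hPorth : ∀ α β, α ≠ β → (P α).comp (P β) = 0)
    (A : H ≃L[ℂ] H) (Q : Γ → H →L[ℂ] H) (P0 : Γ → H →L[ℂ] H)
    (hP0 : ∀ γ, P0 γ = ((A : H →L[ℂ] H).comp (Q γ)).comp (A.symm : H →L[ℂ] H))
    (M : ℝ) (hM : M = ‖(A : H →L[ℂ] H)‖ * ‖(A.symm : H →L[ℂ] H)‖)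
    (hbound : ∀ x : H, (Summable fun γ => ‖P0 γ x‖ ^ 2) ∧
      ∑' γ, ‖P0 γ x‖ ^ 2 ≤ M ^ 2 * ‖x‖ ^ 2)
    (Γ₁ : Finset Γ)
    (htail : Summable fun γ : {γ : Γ // γ ∉ Γ₁} => ‖P γ.1 - P0 γ.1‖ ^ 2)
    (hsmall : M ^ 2 * ∑' γ : {γ : Γ // γ ∉ Γ₁}, ‖P γ.1 - P0 γ.1‖ ^ 2 < 1 / 4) :
    ∃ T : H →L[ℂ] H,
      (∀ x : H, HasSum (fun γ : {γ : Γ // γ ∉ Γ₁} =>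
          (P γ.1 - P0 γ.1) (P0 γ.1 x)) (T x)) ∧
      ‖T‖ < 1 / 2 ∧
      ∃ B : H ≃L[ℂ] H, (B : H →L[ℂ] H) = 1 + T :=
  bari_markus_perturbation_operator_general P P0 M hbound Γ₁ htail hsmall
end

section
/- Let r = (r(k))_{k∈2ℤ} ∈ ℓ²(2ℤ) with nonnegative entries, norm ‖r‖, and tail E_m(r) = (∑_{|j|≥m} r(j)²)^{1/2}. Then for every n ∈ 2ℤ with |n| ≥ 1: ∑_{i,k∈2ℤ, i≠n, k≠n} r(i+k)²/(|n−i||n−k|) ≤ 12 ( ‖r‖²/√|n| + E_{|n|}(r)² ). -/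
/-!
Substituting `i = n - 2a`, `k = n - 2b` and `c = a + b` turns the double sum into
`∑_c r(2n - 2c)² K(c)` with `K(c) = ∑_a 1 / (|2a| |2(c - a)|)`. The elementary bound
`1/(xy) ≤ √(2/m) (x^{-3/2} + y^{-3/2})` for `x + y ≥ m`, applied with `m = max |c| 1`,
together with `∑_{a ≠ 0} |a|^{-3/2} ≤ 8`, gives `K(c) ≤ 4 √(2 / max |c| 1)`.
If `|2n - 2c| < |n|` then `2|c| > |n|`, so `K(c) ≤ 8/√|n|`; otherwise `K(c) ≤ 8`.
Summing over the even index `j = 2n - 2c` yields `8 ‖r‖²/√|n| + 8 E_{|n|}(r)²`.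
-/

open scoped ENNReal
open Finset

lemma inv_mul_sqrt_le_sub {x : ℝ} (hx : 1 ≤ x) :
    (x * √x)⁻¹ ≤ 4 * ((√x)⁻¹ - (√(x + 1))⁻¹) := by
  set s := √x
  set t := √(x + 1)
  have hs1 : 1 ≤ s := Real.one_le_sqrt.mpr hx
  have hs2 : s ^ 2 = x := Real.sq_sqrt (by linarith)
  have ht2 : t ^ 2 = x + 1 := Real.sq_sqrt (by linarith)
  have hst : s ≤ t := Real.sqrt_le_sqrt (by linarith)
  have ht : t ≤ 2 * s := by nlinarith
  have hdiff : (t - s) * (t + s) = 1 := by nlinarith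
  rw [← hs2, inv_sub_inv (by positivity) (by positivity), ← mul_div_assoc, inv_eq_one_div,
    div_le_div_iff₀ (by positivity) (by positivity)]
  nlinarith [mul_le_mul_of_nonneg_left ht (by positivity : (0 : ℝ) ≤ s),
    mul_nonneg (sub_nonneg.mpr hst) (sub_nonneg.mpr hs1)]

lemma sum_range_inv_mul_sqrt_le (N : ℕ) : ∑ k ∈ range N, ((k : ℝ) * √k)⁻¹ ≤ 4 := by
  rcases N with _ | N
  · norm_num
  rw [sum_range_succ']
  have htelescope : ∑ k ∈ range N, (((k + 1 : ℕ) : ℝ) * √(k + 1 : ℕ))⁻¹ ≤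
      ∑ k ∈ range N, 4 * ((√((k : ℕ) + 1 : ℝ))⁻¹ - (√(((k + 1 : ℕ) : ℝ) + 1))⁻¹) := by
    gcongr with k
    push_cast
    exact inv_mul_sqrt_le_sub (by linarith [k.cast_nonneg (α := ℝ)])
  rw [← mul_sum, sum_range_sub' (fun k : ℕ => (√((k : ℝ) + 1))⁻¹)] at htelescope
  have : 0 ≤ (√((N : ℝ) + 1))⁻¹ := by positivity
  norm_num at htelescope ⊢
  linarith

lemma tsum_nat_inv_mul_sqrt_le : ∑' k : ℕ, ENNReal.ofReal ((k : ℝ) * √k)⁻¹ ≤ 4 := by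
  refine ENNReal.tsum_le_of_sum_range_le fun N => ?_
  rw [← ENNReal.ofReal_sum_of_nonneg fun _ _ => by positivity, ← ENNReal.ofReal_ofNat]
  exact ENNReal.ofReal_le_ofReal (sum_range_inv_mul_sqrt_le N)

lemma tsum_int_inv_abs_mul_sqrt_le :
    ∑' a : ℤ, ENNReal.ofReal (|(a : ℝ)| * √|(a : ℝ)|)⁻¹ ≤ 8 := by
  rw [tsum_of_nat_of_neg_add_one ENNReal.summable ENNReal.summable]
  have hnonneg : ∑' k : ℕ, ENNReal.ofReal (|((k : ℤ) : ℝ)| * √|((k : ℤ) : ℝ)|)⁻¹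
      = ∑' k : ℕ, ENNReal.ofReal ((k : ℝ) * √k)⁻¹ := by simp
  have hneg : ∑' k : ℕ, ENNReal.ofReal (|((-(k + 1 : ℤ) : ℤ) : ℝ)| * √|((-(k + 1 : ℤ) : ℤ) : ℝ)|)⁻¹
      ≤ ∑' k : ℕ, ENNReal.ofReal ((k : ℝ) * √k)⁻¹ := by
    convert ENNReal.tsum_comp_le_tsum_of_injective Nat.succ_injective
      (fun k : ℕ => ENNReal.ofReal ((k : ℝ) * √k)⁻¹) using 4 with k
    push_cast
    rw [abs_neg, abs_of_nonneg (by positivity)]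
  calc _ ≤ (4 : ℝ≥0∞) + 4 :=
        add_le_add (hnonneg ▸ tsum_nat_inv_mul_sqrt_le) (hneg.trans tsum_nat_inv_mul_sqrt_le)
    _ = 8 := by norm_num

lemma inv_mul_le_sqrt_mul_add {x y m : ℝ} (hx : 0 < x) (hy : 0 < y) (hm : 0 < m)
    (hmxy : m ≤ x + y) : (x * y)⁻¹ ≤ √(2 / m) * ((x * √x)⁻¹ + (y * √y)⁻¹) := by
  wlog hxy : x ≤ y generalizing x y
  · simpa only [mul_comm x y, add_comm (x * √x)⁻¹] using
      this hy hx (by linarith) (by linarith)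
  -- The larger factor satisfies `y ≥ m / 2`; this is where the decay in `m` comes from.
  have hsqrt : √x ≤ √(2 / m) * y := by
    rw [← Real.sqrt_sq hy.le, ← Real.sqrt_mul (by positivity)]
    refine Real.sqrt_le_sqrt ?_
    rw [div_mul_eq_mul_div, le_div_iff₀ hm]
    nlinarith
  calc (x * y)⁻¹ = (x * √x)⁻¹ * (√x / y) := by
        field_simp [(Real.sqrt_pos.mpr hx).ne']
    _ ≤ (x * √x)⁻¹ * √(2 / m) := by
        gcongr
        rwa [div_le_iff₀ hy]
    _ ≤ √(2 / m) * ((x * √x)⁻¹ + (y * √y)⁻¹) := by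
        rw [mul_comm]
        gcongr
        exact le_add_of_nonneg_right (by positivity)

/-- `1 / |a|`, which is `0` at `a = 0` because `(0 : ℝ)⁻¹ = 0`; this makes the terms
`i = n` and `k = n` excluded from the double sum vanish on their own. -/
noncomputable def invAbs (a : ℤ) : ℝ≥0∞ := ENNReal.ofReal |(a : ℝ)|⁻¹

@[simp] lemma invAbs_zero : invAbs 0 = 0 := by simp [invAbs]

lemma ofReal_sq_div_abs_mul_abs (x : ℝ) (a b : ℤ) :
    ENNReal.ofReal (x ^ 2 / (((|a| : ℤ) : ℝ) * ((|b| : ℤ) : ℝ))) =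
      ENNReal.ofReal (x ^ 2) * (invAbs a * invAbs b) := by
  rw [invAbs, invAbs, ← ENNReal.ofReal_mul (by positivity), ← ENNReal.ofReal_mul (by positivity),
    div_eq_mul_inv, mul_inv, Int.cast_abs, Int.cast_abs]

lemma invAbs_two_mul_mul_le (c a : ℤ) :
    invAbs (2 * a) * invAbs (2 * (c - a)) ≤ ENNReal.ofReal (√(2 / max |(c : ℝ)| 1) / 4) *
      (ENNReal.ofReal (|(a : ℝ)| * √|(a : ℝ)|)⁻¹ +
        ENNReal.ofReal (|((c - a : ℤ) : ℝ)| * √|((c - a : ℤ) : ℝ)|)⁻¹) := by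
  rcases eq_or_ne a 0 with rfl | ha
  · simp
  rcases eq_or_ne (c - a) 0 with hca | hca
  · simp [hca]
  have hx : (1 : ℝ) ≤ |(a : ℝ)| := by exact_mod_cast Int.one_le_abs ha
  have hy : (0 : ℝ) < |((c - a : ℤ) : ℝ)| := by positivity
  have hmxy : max |(c : ℝ)| 1 ≤ |(a : ℝ)| + |((c - a : ℤ) : ℝ)| := by
    refine max_le ?_ (by linarith)
    simpa using abs_add_le (a : ℝ) ((c : ℝ) - a)
  have key := inv_mul_le_sqrt_mul_add (by linarith) hy (by positivity) hmxy
  rw [invAbs, invAbs, ← ENNReal.ofReal_mul (by positivity),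
    ← ENNReal.ofReal_add (by positivity) (by positivity), ← ENNReal.ofReal_mul (by positivity)]
  refine ENNReal.ofReal_le_ofReal ?_
  push_cast at key ⊢
  rw [abs_mul, abs_mul, abs_two]
  calc (2 * |(a : ℝ)|)⁻¹ * (2 * |(c : ℝ) - a|)⁻¹ = (|(a : ℝ)| * |(c : ℝ) - a|)⁻¹ / 4 := by
        rw [mul_inv, mul_inv, mul_inv]; ring
    _ ≤ _ := by rw [div_mul_eq_mul_div]; gcongr

lemma tsum_invAbs_two_mul_mul_le (c : ℤ) :
    ∑' a, invAbs (2 * a) * invAbs (2 * (c - a)) ≤ ENNReal.ofReal (4 * √(2 / max |(c : ℝ)| 1)) := by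
  set u : ℤ → ℝ≥0∞ := fun a => ENNReal.ofReal (|(a : ℝ)| * √|(a : ℝ)|)⁻¹
  have hu : ∑' a, u a ≤ 8 := tsum_int_inv_abs_mul_sqrt_le
  have hshift : ∑' a, u (c - a) = ∑' a, u a := (Equiv.subLeft c).tsum_eq u
  calc ∑' a, invAbs (2 * a) * invAbs (2 * (c - a))
      ≤ ∑' a, ENNReal.ofReal (√(2 / max |(c : ℝ)| 1) / 4) * (u a + u (c - a)) :=
        ENNReal.summable.tsum_le_tsum (invAbs_two_mul_mul_le c) ENNReal.summable
    _ = ENNReal.ofReal (√(2 / max |(c : ℝ)| 1) / 4) * (∑' a, u a + ∑' a, u a) := by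
        rw [ENNReal.tsum_mul_left, ENNReal.tsum_add, hshift]
    _ ≤ ENNReal.ofReal (√(2 / max |(c : ℝ)| 1) / 4) * ENNReal.ofReal 16 := by
        rw [ENNReal.ofReal_ofNat]
        gcongr
        exact (add_le_add hu hu).trans (by norm_num)
    _ = ENNReal.ofReal (4 * √(2 / max |(c : ℝ)| 1)) := by
        rw [← ENNReal.ofReal_mul (by positivity)]
        ring_nf

lemma tsum_invAbs_two_mul_mul_le_ite {n : ℤ} (hn : n ≠ 0) (c : ℤ) :
    ∑' a, invAbs (2 * a) * invAbs (2 * (c - a)) ≤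
      if |n| ≤ |2 * n - 2 * c| then 8 else ENNReal.ofReal (8 / √|(n : ℝ)|) := by
  refine (tsum_invAbs_two_mul_mul_le c).trans ?_
  have hM : 1 ≤ max |(c : ℝ)| 1 := le_max_right _ _
  split_ifs with htail
  · rw [← ENNReal.ofReal_ofNat]
    refine ENNReal.ofReal_le_ofReal ?_
    have : √(2 / max |(c : ℝ)| 1) ≤ 2 := by
      rw [Real.sqrt_le_left (by norm_num), div_le_iff₀ (by positivity)]
      nlinarith
    linarith
  · have hn' : (0 : ℝ) < |(n : ℝ)| := by positivity
    have hc : |(n : ℝ)| < 2 * max |(c : ℝ)| 1 := by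
      have : |n| < 2 * |c| := by
        have := abs_sub_le (2 * n) (2 * c) 0
        simp only [sub_zero, abs_mul, abs_two] at this
        omega
      have : (|n| : ℝ) < 2 * |c| := by exact_mod_cast this
      push_cast at this
      linarith [le_max_left |(c : ℝ)| 1]
    refine ENNReal.ofReal_le_ofReal ?_
    have : √(2 / max |(c : ℝ)| 1) ≤ 2 / √|(n : ℝ)| := by
      rw [Real.sqrt_le_left (by positivity), div_pow, Real.sq_sqrt hn'.le,
        div_le_div_iff₀ (by positivity) hn']
      linarith
    calc 4 * √(2 / max |(c : ℝ)| 1) ≤ 4 * (2 / √|(n : ℝ)|) := by gcongr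
      _ = 8 / √|(n : ℝ)| := by ring

theorem ENNReal.tsum_prod_add_eq {G : Type*} [AddCommGroup G] (f u v : G → ℝ≥0∞) :
    ∑' q : G × G, f (q.1 + q.2) * (u q.1 * v q.2) = ∑' c, f c * ∑' a, u a * v (c - a) := by
  let shear : G × G ≃ G × G := Equiv.prodShear (Equiv.refl G) Equiv.addLeft
  let F : G × G → ℝ≥0∞ := fun p => f p.2 * (u p.1 * v (p.2 - p.1))
  calc ∑' q : G × G, f (q.1 + q.2) * (u q.1 * v q.2) = ∑' q, F (shear q) := by
        simp [F, shear]
    _ = ∑' q, F q := shear.tsum_eq F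
    _ = ∑' a, ∑' c, f c * (u a * v (c - a)) :=
        ENNReal.tsum_prod (f := fun a c => f c * (u a * v (c - a)))
    _ = ∑' c, f c * ∑' a, u a * v (c - a) := by
        rw [ENNReal.tsum_comm]
        simp_rw [ENNReal.tsum_mul_left]

theorem tsum_even_pairs_eq (G : ℤ × ℤ → ℝ≥0∞) {n : ℤ} (hn : Even n)
    (hG : ∀ p : ℤ × ℤ, p.1 = n ∨ p.2 = n → G p = 0) :
    ∑' p : {p : ℤ × ℤ // Even p.1 ∧ Even p.2 ∧ p.1 ≠ n ∧ p.2 ≠ n}, G p =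
      ∑' q : ℤ × ℤ, G (n - 2 * q.1, n - 2 * q.2) := by
  obtain ⟨m, rfl⟩ := hn
  let half : {p : ℤ × ℤ // Even p.1 ∧ Even p.2 ∧ p.1 ≠ m + m ∧ p.2 ≠ m + m} → ℤ × ℤ :=
    fun p => ((m + m - p.1.1) / 2, (m + m - p.1.2) / 2)
  have half_injective : Function.Injective half := by
    rintro ⟨⟨i, k⟩, ⟨i', hi⟩, ⟨k', hk⟩, _⟩ ⟨⟨j, l⟩, ⟨j', hj⟩, ⟨l', hl⟩, _⟩ h
    simp only [half, Prod.mk.injEq, Subtype.mk.injEq] at hi hk hj hl h ⊢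
    omega
  have support_subset : Function.support (fun q : ℤ × ℤ => G (m + m - 2 * q.1, m + m - 2 * q.2))
      ⊆ Set.range half := by
    rintro ⟨a, b⟩ hab
    have ha : a ≠ 0 := by rintro rfl; exact hab (hG _ (Or.inl (by simp)))
    have hb : b ≠ 0 := by rintro rfl; exact hab (hG _ (Or.inr (by simp)))
    refine ⟨⟨(m + m - 2 * a, m + m - 2 * b), ⟨m - a, by ring⟩, ⟨m - b, by ring⟩, by omega,
      by omega⟩, ?_⟩
    simp only [half, Prod.mk.injEq]
    omega
  rw [← half_injective.tsum_eq support_subset]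
  refine tsum_congr fun ⟨⟨i, k⟩, ⟨i', hi⟩, ⟨k', hk⟩, _⟩ => ?_
  dsimp only [half] at hi hk ⊢
  congr 2 <;> omega

lemma tsum_two_mul_sub_mul_le (g K : ℤ → ℝ≥0∞) (n : ℤ) {A B : ℝ≥0∞}
    (hK : ∀ c, K c ≤ if |n| ≤ |2 * n - 2 * c| then B else A) :
    ∑' c, g (2 * n - 2 * c) * K c ≤
      A * ∑' k : {k : ℤ // Even k}, g k + B * ∑' j : {j : ℤ // Even j ∧ |n| ≤ |j|}, g j := by
  set tail : Set ℤ := {c | |n| ≤ |2 * n - 2 * c|}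
  have two_mul_sub_injective : Function.Injective fun c : ℤ => 2 * n - 2 * c := by
    intro c c' h
    simp only at h
    omega
  rw [← ENNReal.summable.tsum_add_tsum_compl (s := tail) ENNReal.summable, add_comm]
  gcongr
  · calc ∑' c : ↑tailᶜ, g (2 * n - 2 * c) * K c ≤ ∑' c : ↑tailᶜ, A * g (2 * n - 2 * c) := by
          refine ENNReal.summable.tsum_le_tsum (fun c => ?_) ENNReal.summable
          rw [mul_comm A]
          exact mul_le_mul_right ((hK c).trans_eq (if_neg c.2)) _
      _ ≤ A * ∑' k : {k : ℤ // Even k}, g k := by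
          rw [ENNReal.tsum_mul_left]
          gcongr
          exact ENNReal.tsum_comp_le_tsum_of_injective
            (f := fun c : ↑tailᶜ => (⟨2 * n - 2 * c, (even_two_mul n).sub (even_two_mul _)⟩ :
              {k : ℤ // Even k}))
            (fun c c' h => Subtype.ext (two_mul_sub_injective (congrArg Subtype.val h))) (g ·)
  · calc ∑' c : ↑tail, g (2 * n - 2 * c) * K c ≤ ∑' c : ↑tail, B * g (2 * n - 2 * c) := by
          refine ENNReal.summable.tsum_le_tsum (fun c => ?_) ENNReal.summable
          rw [mul_comm B]
          exact mul_le_mul_right ((hK c).trans_eq (if_pos c.2)) _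
      _ ≤ B * ∑' j : {j : ℤ // Even j ∧ |n| ≤ |j|}, g j := by
          rw [ENNReal.tsum_mul_left]
          gcongr
          exact ENNReal.tsum_comp_le_tsum_of_injective
            (f := fun c : ↑tail => (⟨2 * n - 2 * c, (even_two_mul n).sub (even_two_mul _), c.2⟩ :
              {j : ℤ // Even j ∧ |n| ≤ |j|}))
            (fun c c' h => Subtype.ext (two_mul_sub_injective (congrArg Subtype.val h))) (g ·)

theorem tsum_even_pairs_mul_invAbs_le (g : ℤ → ℝ≥0∞) {n : ℤ} (hn : Even n) (hn0 : n ≠ 0) :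
    ∑' p : {p : ℤ × ℤ // Even p.1 ∧ Even p.2 ∧ p.1 ≠ n ∧ p.2 ≠ n},
        g (p.1.1 + p.1.2) * (invAbs (n - p.1.1) * invAbs (n - p.1.2)) ≤
      ENNReal.ofReal (8 / √|(n : ℝ)|) * ∑' k : {k : ℤ // Even k}, g k +
        8 * ∑' j : {j : ℤ // Even j ∧ |n| ≤ |j|}, g j := by
  rw [tsum_even_pairs_eq (fun p => g (p.1 + p.2) * (invAbs (n - p.1) * invAbs (n - p.2))) hn
    (by rintro ⟨i, k⟩ (rfl | rfl) <;> simp)]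
  calc _ = ∑' q : ℤ × ℤ, g (2 * n - 2 * (q.1 + q.2)) * (invAbs (2 * q.1) * invAbs (2 * q.2)) := by
        refine tsum_congr fun q => ?_
        dsimp only
        rw [sub_sub_cancel, sub_sub_cancel,
          show n - 2 * q.1 + (n - 2 * q.2) = 2 * n - 2 * (q.1 + q.2) by ring]
    _ = ∑' c, g (2 * n - 2 * c) * ∑' a, invAbs (2 * a) * invAbs (2 * (c - a)) :=
        ENNReal.tsum_prod_add_eq (fun c => g (2 * n - 2 * c)) (fun a => invAbs (2 * a))
          (fun b => invAbs (2 * b))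
    _ ≤ _ := tsum_two_mul_sub_mul_le _ _ n (tsum_invAbs_two_mul_mul_le_ite hn0)

lemma tsum_le_of_tsum_ofReal_le {ι : Type*} {f : ι → ℝ} {b : ℝ} (hf : ∀ i, 0 ≤ f i) (hb : 0 ≤ b)
    (h : ∑' i, ENNReal.ofReal (f i) ≤ ENNReal.ofReal b) : ∑' i, f i ≤ b := by
  calc ∑' i, f i = (∑' i, ENNReal.ofReal (f i)).toReal := by
        rw [ENNReal.tsum_toReal_eq fun _ => ENNReal.ofReal_ne_top]
        exact tsum_congr fun i => (ENNReal.toReal_ofReal (hf i)).symm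
    _ ≤ b := ENNReal.toReal_le_of_le_ofReal hb h

theorem ell2_weighted_tail_estimate_double_general
    (r : ℤ → ℝ)
    (hsum : Summable fun k : {k : ℤ // Even k} => r k ^ 2)
    (n : ℤ) (hn : Even n) (hn1 : 1 ≤ |n|) :
    ∑' p : {p : ℤ × ℤ // Even p.1 ∧ Even p.2 ∧ p.1 ≠ n ∧ p.2 ≠ n},
        r ((p : ℤ × ℤ).1 + (p : ℤ × ℤ).2) ^ 2 /
          (((|n - (p : ℤ × ℤ).1| : ℤ) : ℝ) * ((|n - (p : ℤ × ℤ).2| : ℤ) : ℝ)) ≤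
      12 * ((∑' k : {k : ℤ // Even k}, r k ^ 2) / Real.sqrt ((|n| : ℤ) : ℝ) +
        ∑' j : {j : ℤ // Even j ∧ |n| ≤ |j|}, r j ^ 2) := by
  have hn0 : n ≠ 0 := abs_pos.mp (by omega)
  have hS := ENNReal.ofReal_tsum_of_nonneg (fun _ => sq_nonneg _) hsum
  have hE := ENNReal.ofReal_tsum_of_nonneg (fun _ => sq_nonneg _)
    (hsum.comp_injective (i := fun j : {j : ℤ // Even j ∧ |n| ≤ |j|} => ⟨j.1, j.2.1⟩)
      fun j j' h => Subtype.ext (Subtype.mk.inj h))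
  refine tsum_le_of_tsum_ofReal_le (fun _ => by positivity) (by positivity) ?_
  simp_rw [ofReal_sq_div_abs_mul_abs]
  refine (tsum_even_pairs_mul_invAbs_le (fun k => ENNReal.ofReal (r k ^ 2)) hn hn0).trans ?_
  rw [← hS, ← hE, ← ENNReal.ofReal_ofNat 8, ← ENNReal.ofReal_mul (by positivity),
    ← ENNReal.ofReal_mul (by positivity), ← ENNReal.ofReal_add (by positivity) (by positivity)]
  refine ENNReal.ofReal_le_ofReal ?_
  rw [Int.cast_abs, div_mul_eq_mul_div, mul_div_assoc]
  have : 0 ≤ (∑' k : {k : ℤ // Even k}, r k ^ 2) / √|(n : ℝ)| := by positivity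
  have : 0 ≤ ∑' j : {j : ℤ // Even j ∧ |n| ≤ |j|}, r j ^ 2 := by positivity
  linarith

/-- inequality (t2) of the paper: for `r ∈ ℓ²(2ℤ)` with nonnegative
entries and `n ∈ 2ℤ`, `|n| ≥ 1`:
`∑_{i,k∈2ℤ, i≠n, k≠n} r(i+k)²/(|n−i||n−k|) ≤ 12(‖r‖²/√|n| + E_{|n|}(r)²)`. -/
theorem ell2_weighted_tail_estimate_double
    (r : ℤ → ℝ) (hpos : ∀ k, 0 ≤ r k)
    (hsum : Summable fun k : {k : ℤ // Even k} => r k ^ 2)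
    (n : ℤ) (hn : Even n) (hn1 : 1 ≤ |n|) :
    ∑' p : {p : ℤ × ℤ // Even p.1 ∧ Even p.2 ∧ p.1 ≠ n ∧ p.2 ≠ n},
        r ((p : ℤ × ℤ).1 + (p : ℤ × ℤ).2) ^ 2 /
          (((|n - (p : ℤ × ℤ).1| : ℤ) : ℝ) * ((|n - (p : ℤ × ℤ).2| : ℤ) : ℝ)) ≤
      12 * ((∑' k : {k : ℤ // Even k}, r k ^ 2) / Real.sqrt ((|n| : ℤ) : ℝ) +
        ∑' j : {j : ℤ // Even j ∧ |n| ≤ |j|}, r j ^ 2) :=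
  ell2_weighted_tail_estimate_double_general r hsum n hn hn1
end
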